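/- arXiv:1012.3613 — 3 statements merged into one kernel-verified Lean document; each statement's English description precedes it below -/
import Mathlib

section
/- For the sequence u_n = N_n / (φ(N_n) · log log N_n), the inequality u_n > u_{n+1} is equivalent to log(1 + log p_{n+1} / θ(p_n)) > log θ(p_{n+1}) / p_{n+1}. -/
open Filter Topology Finset Real

/-- the k-th prime (1-indexed): `prim 1 = 2`. -/
noncomputable def prim (k : ℕ) : ℕ := Nat.nth Nat.Prime (k - 1)

/-- the primorial of order `n`: the product of the first `n` primes. -/
noncomputable def primorialN (n : ℕ) : ℕ := ∏ k ∈ Finset.Icc 1 n, prim k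

/-- Chebyshev's first summatory function `θ(x) = ∑_{p ≤ x} log p`. -/
noncomputable def cheb (x : ℝ) : ℝ :=
  ∑ q ∈ Finset.filter Nat.Prime (Finset.Iic ⌊x⌋₊), Real.log q

/-- the Nicolas ratio `u n = N_n / (φ(N_n) log log N_n)`. -/
noncomputable def u (n : ℕ) : ℝ :=
  (primorialN n : ℝ) / (Nat.totient (primorialN n) * Real.log (Real.log (primorialN n)))

/-- the Dedekind `Ψ` function (real-valued). -/
noncomputable def psi (n : ℕ) : ℝ := n * ∏ p ∈ n.primeFactors, (1 + 1 / (p : ℝ))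

/-- the ratio `v n = Ψ(N_n)/(N_n log log N_n)`. -/
noncomputable def v (n : ℕ) : ℝ :=
  psi (primorialN n) / (primorialN n * Real.log (Real.log (primorialN n)))

/-! Since `log N_n = θ(p_n)` and `N_{n+1} = N_n p` with `p = p_{n+1}` coprime to `N_n`, the ratio
`N/φ(N)` gets multiplied by `p/(p-1)` while `θ(p_{n+1}) = θ(p_n) + log p`. So `u_n > u_{n+1}`
reads `p log θ(p_n) < (p - 1) log θ(p_{n+1})`, which is the stated inequality once
`log(1 + log p / θ(p_n)) = log θ(p_{n+1}) - log θ(p_n)`. For `n ≥ 2` we have `θ(p_n) > 1`,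
so both `log log N` are positive and the comparison may be cross-multiplied. -/

lemma prim_prime (k : ℕ) : (prim k).Prime := Nat.prime_nth_prime _

lemma prim_le_prim_iff {k l : ℕ} (hk : 1 ≤ k) (hl : 1 ≤ l) : prim k ≤ prim l ↔ k ≤ l := by
  rw [prim, prim, Nat.nth_le_nth Nat.infinite_setOfPred_prime]
  omega

lemma prim_injOn : Set.InjOn prim (Set.Ici 1) := fun _ hk _ hl h =>
  le_antisymm ((prim_le_prim_iff hk hl).1 h.le) ((prim_le_prim_iff hl hk).1 h.ge)

lemma primorialN_succ (n : ℕ) : primorialN (n + 1) = primorialN n * prim (n + 1) :=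
  prod_Icc_succ_top (by omega) _

lemma primorialN_pos (n : ℕ) : 0 < primorialN n :=
  prod_pos fun k _ => (prim_prime k).pos

lemma coprime_prim_succ_primorialN (n : ℕ) : (prim (n + 1)).Coprime (primorialN n) := by
  refine Nat.Coprime.prod_right fun k hk => ?_
  refine (Nat.coprime_primes (prim_prime _) (prim_prime _)).2 fun h => ?_
  have := prim_injOn (by simp) (by simp [(mem_Icc.1 hk).1]) h
  grind

lemma totient_primorialN_succ (n : ℕ) :
    (Nat.totient (primorialN (n + 1)) : ℝ) = Nat.totient (primorialN n) * (prim (n + 1) - 1) := by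
  rw [primorialN_succ, Nat.totient_mul (coprime_prim_succ_primorialN n).symm,
    Nat.totient_prime (prim_prime _), Nat.cast_mul, Nat.cast_pred (prim_prime _).pos]

lemma filter_prime_Iic_prim {n : ℕ} (hn : 1 ≤ n) :
    filter Nat.Prime (Iic (prim n)) = (Icc 1 n).image prim := by
  ext q
  simp only [mem_filter, mem_Iic, mem_image, mem_Icc]
  constructor
  · rintro ⟨hle, hq⟩
    have hq' : prim (Nat.count Nat.Prime q + 1) = q := Nat.nth_count hq
    refine ⟨Nat.count Nat.Prime q + 1, ⟨by omega, ?_⟩, hq'⟩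
    rwa [← prim_le_prim_iff (by omega) hn, hq']
  · rintro ⟨k, ⟨hk, hkn⟩, rfl⟩
    exact ⟨(prim_le_prim_iff hk hn).2 hkn, prim_prime k⟩

lemma cheb_prim {n : ℕ} (hn : 1 ≤ n) : cheb (prim n) = Real.log (primorialN n) := by
  rw [cheb, Nat.floor_natCast, filter_prime_Iic_prim hn,
    sum_image fun k hk l hl => prim_injOn (mem_Icc.1 hk).1 (mem_Icc.1 hl).1,
    primorialN, Nat.cast_prod, Real.log_prod fun k _ => by exact_mod_cast (prim_prime k).ne_zero]

lemma cheb_prim_succ {n : ℕ} (hn : 1 ≤ n) :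
    cheb (prim (n + 1)) = cheb (prim n) + Real.log (prim (n + 1)) := by
  rw [cheb_prim (by omega), cheb_prim hn, primorialN_succ, Nat.cast_mul,
    Real.log_mul (by exact_mod_cast (primorialN_pos n).ne') (by exact_mod_cast (prim_prime _).ne_zero)]

lemma one_lt_cheb_prim {n : ℕ} (hn : 2 ≤ n) : 1 < cheb (prim n) := by
  have h4 : (4 : ℝ) ≤ primorialN n := by
    have : 2 ^ n ≤ primorialN n := by
      unfold primorialN
      simpa using prod_le_prod' fun k (_ : k ∈ Icc 1 n) => (prim_prime k).two_le
    exact_mod_cast (Nat.pow_le_pow_right two_pos hn).trans this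
  rw [cheb_prim (by omega), Real.lt_log_iff_exp_lt (by linarith)]
  linarith [Real.exp_one_lt_d9]

lemma u_eq {n : ℕ} (hn : 1 ≤ n) :
    u n = (primorialN n : ℝ) / Nat.totient (primorialN n) / Real.log (cheb (prim n)) := by
  rw [u, cheb_prim hn, div_mul_eq_div_div]

lemma u_succ_eq {n : ℕ} (hn : 1 ≤ n) :
    u (n + 1) = (primorialN n : ℝ) / Nat.totient (primorialN n) *
      ((prim (n + 1) : ℝ) / (prim (n + 1) - 1)) / Real.log (cheb (prim (n + 1))) := by
  rw [u, cheb_prim (by omega), totient_primorialN_succ, primorialN_succ, Nat.cast_mul,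
    div_mul_eq_div_div, mul_div_mul_comm]

lemma mul_div_lt_div_iff_div_lt_sub {c p L₁ L₂ : ℝ} (hc : 0 < c) (hp : 1 < p) (hL₁ : 0 < L₁)
    (hL₂ : 0 < L₂) : c * (p / (p - 1)) / L₂ < c / L₁ ↔ L₂ / p < L₂ - L₁ := by
  rw [div_lt_div_iff₀ hL₂ hL₁, div_lt_iff₀ (by linarith), mul_assoc,
    mul_lt_mul_iff_right₀ hc, div_mul_eq_mul_div, div_lt_iff₀ (by linarith)]
  constructor <;> intro h <;> linarith

theorem stmt2 (n : ℕ) (hn : 2 ≤ n) :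
    u n > u (n + 1) ↔
      Real.log (1 + Real.log (prim (n + 1)) / cheb (prim n)) >
        Real.log (cheb (prim (n + 1))) / (prim (n + 1) : ℝ) := by
  have hn₁ : 1 ≤ n := by omega
  have hc : (0 : ℝ) < primorialN n / Nat.totient (primorialN n) :=
    div_pos (mod_cast primorialN_pos n) (mod_cast Nat.totient_pos.2 (primorialN_pos n))
  have hp : (1 : ℝ) < prim (n + 1) := by exact_mod_cast (prim_prime _).one_lt
  have hθ₁ := one_lt_cheb_prim hn
  have hθ₂ := one_lt_cheb_prim (n := n + 1) (by omega)
  have hlog : Real.log (1 + Real.log (prim (n + 1)) / cheb (prim n)) =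
      Real.log (cheb (prim (n + 1))) - Real.log (cheb (prim n)) := by
    rw [one_add_div (by positivity), ← cheb_prim_succ hn₁,
      Real.log_div (by positivity) (by positivity)]
  rw [gt_iff_lt, gt_iff_lt, u_eq hn₁, u_succ_eq hn₁, hlog]
  exact mul_div_lt_div_iff_div_lt_sub hc hp (Real.log_pos hθ₁) (Real.log_pos hθ₂)
end

section
/- Suppose θ(p_n) > k_n where k_n = p_n + C√(p_n) · log log log p_n, and suppose log(1 + log p_{n+1}/θ(p_n)) > log θ(p_{n+1})/p_{n+1} holds (with 0 < log p_{n+1}/θ(p_n) < 1). Then k_n · log k_n < p_{n+1} · log p_{n+1}, and hence k_n < p_{n+1}, i.e., p_{n+1} - p_n > C√(p_n) · log log log p_n. -/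
open Filter Topology Finset Real

theorem stmt7 (n : ℕ) (C : ℝ) (hC : 0 < C)
    (k : ℝ)
    (hk : k = (prim n : ℝ) + C * Real.sqrt (prim n) *
      Real.log (Real.log (Real.log (prim n))))
    (hke : Real.exp 1 < k)
    (htheta : cheb (prim n) > k)
    (hratio0 : 0 < Real.log (prim (n + 1)) / cheb (prim n))
    (hratio1 : Real.log (prim (n + 1)) / cheb (prim n) < 1)
    (hineq : Real.log (1 + Real.log (prim (n + 1)) / cheb (prim n)) >
      Real.log (cheb (prim (n + 1))) / (prim (n + 1) : ℝ)) :
    k * Real.log k < (prim (n + 1) : ℝ) * Real.log (prim (n + 1)) ∧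
      k < (prim (n + 1) : ℝ) ∧
      (prim (n + 1) : ℝ) - prim n >
        C * Real.sqrt (prim n) * Real.log (Real.log (Real.log (prim n))) := by

  have hpp : (prim (n+1)).Prime := by
    unfold prim; exact Nat.prime_nth_prime _
  have hp2 : (2:ℝ) ≤ (prim (n+1) : ℝ) := by exact_mod_cast hpp.two_le
  have hppos : (0:ℝ) < (prim (n+1) : ℝ) := by linarith
  have hkpos : (0:ℝ) < k := lt_trans (Real.exp_pos 1) hke
  have hApos : (0:ℝ) < cheb (prim n) := lt_trans hkpos htheta
  have hle : prim n ≤ prim (n+1) := by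
    unfold prim
    exact Nat.nth_monotone Nat.infinite_setOf_prime (by omega)
  have hcheb_mono : cheb (prim n) ≤ cheb (prim (n+1)) := by
    unfold cheb
    apply Finset.sum_le_sum_of_subset_of_nonneg
    · apply Finset.filter_subset_filter
      exact Finset.Iic_subset_Iic.mpr (Nat.floor_le_floor (by exact_mod_cast hle))
    · intro q hq _
      have hq' : q.Prime := (Finset.mem_filter.mp hq).2
      exact Real.log_nonneg (by exact_mod_cast hq'.one_le)
  -- log(1+r) ≤ r
  have hlog1r : Real.log (1 + Real.log (prim (n + 1)) / cheb (prim n)) ≤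
      Real.log (prim (n + 1)) / cheb (prim n) := by
    have := Real.log_le_sub_one_of_pos (x := 1 + Real.log (prim (n + 1)) / cheb (prim n))
      (by linarith)
    linarith
  have hkey : Real.log (cheb (prim (n+1))) / (prim (n+1) : ℝ) <
      Real.log (prim (n + 1)) / cheb (prim n) := lt_of_lt_of_le hineq hlog1r
  have hkey2 : cheb (prim n) * Real.log (cheb (prim (n+1))) <
      (prim (n+1) : ℝ) * Real.log (prim (n+1)) := by
    rw [div_lt_div_iff₀ hppos hApos] at hkey
    linarith [hkey]
  have hlogk : (0:ℝ) < Real.log k := by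
    have : (1:ℝ) < k := lt_trans (by nlinarith [Real.add_one_le_exp (1:ℝ)]) hke
    exact Real.log_pos this
  have hlogA : Real.log k < Real.log (cheb (prim n)) := Real.log_lt_log hkpos htheta
  have hlogB : Real.log (cheb (prim n)) ≤ Real.log (cheb (prim (n+1))) :=
    Real.log_le_log hApos hcheb_mono
  have h1 : k * Real.log k < (prim (n + 1) : ℝ) * Real.log (prim (n + 1)) := by
    have : k * Real.log k < cheb (prim n) * Real.log (cheb (prim (n+1))) := by
      exact mul_lt_mul htheta (by linarith) hlogk hApos.le
    linarith
  have h2 : k < (prim (n + 1) : ℝ) := by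
    by_contra h
    push_neg at h
    have hlp : (0:ℝ) < Real.log (prim (n+1)) := Real.log_pos (by linarith)
    have : (prim (n + 1) : ℝ) * Real.log (prim (n + 1)) ≤ k * Real.log k := by
      apply mul_le_mul h (Real.log_le_log hppos h) hlp.le hkpos.le
    linarith
  refine ⟨h1, h2, ?_⟩
  rw [hk] at h2
  linarith
end

section
/- For the sequence v_n = Ψ(N_n) / (N_n · log log N_n), the inequality v_n > v_{n+1} is equivalent to log(1 + log p_{n+1} / θ(p_n)) > log θ(p_n) / p_{n+1}. -/
open Filter Topology Finset Real

lemma prim_injOn_s12 {n : ℕ} : ∀ a ∈ Finset.Icc 1 n, ∀ b ∈ Finset.Icc 1 n,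
    prim a = prim b → a = b := by
  intro a ha b hb hab
  simp only [Finset.mem_Icc] at ha hb
  have := Nat.nth_injective Nat.infinite_setOf_prime hab
  omega

lemma prod_image_prim (n : ℕ) :
    ∏ p ∈ Finset.image prim (Finset.Icc 1 n), p = primorialN n :=
  Finset.prod_image prim_injOn_s12

lemma primeFactors_primorialN (n : ℕ) :
    (primorialN n).primeFactors = Finset.image prim (Finset.Icc 1 n) := by
  rw [← prod_image_prim]
  exact Nat.primeFactors_prod (by simp only [Finset.mem_image]; rintro p ⟨k, -, rfl⟩; exact prim_prime k)

lemma filter_primes_Iic {n : ℕ} (hn : 1 ≤ n) :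
    Finset.filter Nat.Prime (Finset.Iic (prim n)) = Finset.image prim (Finset.Icc 1 n) := by
  ext q
  simp only [Finset.mem_filter, Finset.mem_Iic, Finset.mem_image, Finset.mem_Icc]
  constructor
  · rintro ⟨hq, hp⟩
    refine ⟨Nat.count Nat.Prime q + 1, ⟨by omega, ?_⟩, by simp [prim, Nat.nth_count hp]⟩
    have h1 : Nat.nth Nat.Prime (Nat.count Nat.Prime q) = q := Nat.nth_count hp
    have h2 : Nat.nth Nat.Prime (Nat.count Nat.Prime q) ≤ Nat.nth Nat.Prime (n - 1) := by
      rw [h1]; exact hq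
    have := (Nat.nth_le_nth Nat.infinite_setOf_prime).1 h2
    omega
  · rintro ⟨k, ⟨hk1, hkn⟩, rfl⟩
    refine ⟨?_, prim_prime k⟩
    exact (Nat.nth_le_nth Nat.infinite_setOf_prime).2 (by omega)

lemma four_le_primorialN {n : ℕ} (hn : 2 ≤ n) : 4 ≤ primorialN n := by
  calc (4 : ℕ) = 2 ^ 2 := rfl
    _ ≤ 2 ^ n := Nat.pow_le_pow_right (by norm_num) hn
    _ = ∏ _k ∈ Finset.Icc 1 n, 2 := by simp [Nat.card_Icc]
    _ ≤ primorialN n := Finset.prod_le_prod' fun k _ => (prim_prime k).two_le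

lemma one_lt_log_primorialN {n : ℕ} (hn : 2 ≤ n) : 1 < Real.log (primorialN n) := by
  have h4 : (4 : ℝ) ≤ (primorialN n : ℝ) := by exact_mod_cast four_le_primorialN hn
  rw [← Real.log_exp 1]
  apply Real.log_lt_log (Real.exp_pos 1)
  calc Real.exp 1 < 2.7182818286 := Real.exp_one_lt_d9
    _ < 4 := by norm_num
    _ ≤ _ := h4

lemma v_eq {n : ℕ} :
    v n = (∏ k ∈ Finset.Icc 1 n, (1 + 1 / (prim k : ℝ))) /
      Real.log (Real.log (primorialN n)) := by
  have hN : (0 : ℝ) < (primorialN n : ℝ) := by exact_mod_cast primorialN_pos n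
  rw [v, psi, primeFactors_primorialN,
    Finset.prod_image (g := prim) (f := fun p : ℕ => 1 + 1 / (p : ℝ)) prim_injOn_s12]
  exact mul_div_mul_left _ _ hN.ne'

theorem stmt12 (n : ℕ) (hn : 2 ≤ n) :
    v n > v (n + 1) ↔
      Real.log (1 + Real.log (prim (n + 1)) / cheb (prim n)) >
        Real.log (cheb (prim n)) / (prim (n + 1) : ℝ) := by
  set P : ℝ := (prim (n + 1) : ℝ) with hP
  have hPpos : (0 : ℝ) < P := by rw [hP]; exact_mod_cast (prim_prime (n + 1)).pos
  have hP1 : (1 : ℝ) < P := by rw [hP]; exact_mod_cast (prim_prime (n + 1)).one_lt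
  set L : ℝ := Real.log (primorialN n) with hL
  set L' : ℝ := Real.log (primorialN (n + 1)) with hL'
  have hL1 : 1 < L := one_lt_log_primorialN hn
  have hL'1 : 1 < L' := one_lt_log_primorialN (by omega)
  have hLpos : 0 < L := by linarith
  have hL'pos : 0 < L' := by linarith
  have hlogL : 0 < Real.log L := Real.log_pos hL1
  have hlogL' : 0 < Real.log L' := Real.log_pos hL'1
  have hcheb : cheb (prim n) = L := cheb_prim (by omega)
  have hsucc : primorialN (n + 1) = primorialN n * prim (n + 1) := by
    rw [primorialN, primorialN, Finset.prod_Icc_succ_top (by omega)]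
  have hL'eq : L' = L + Real.log P := by
    rw [hL', hsucc, Nat.cast_mul, Real.log_mul (by exact_mod_cast (primorialN_pos n).ne')
      (by exact_mod_cast (prim_prime (n + 1)).pos.ne'), hL, hP]
  have hA : ∀ m, 0 < ∏ k ∈ Finset.Icc 1 m, (1 + 1 / (prim k : ℝ)) := by
    intro m
    apply Finset.prod_pos
    intro k _
    have : (0 : ℝ) < (prim k : ℝ) := by exact_mod_cast (prim_prime k).pos
    positivity
  set A : ℝ := ∏ k ∈ Finset.Icc 1 n, (1 + 1 / (prim k : ℝ)) with hAdef
  have hApos : 0 < A := hA n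
  have hvn : v n = A / Real.log L := by rw [v_eq, hL]
  have hvn1 : v (n + 1) = A * (1 + 1 / P) / Real.log L' := by
    rw [v_eq, ← hL', Finset.prod_Icc_succ_top (by omega : 1 ≤ n + 1), ← hAdef, hP]
  have key : v n > v (n + 1) ↔ (1 + 1 / P) * Real.log L < Real.log L' := by
    rw [hvn, hvn1, gt_iff_lt, div_lt_div_iff₀ hlogL' hlogL]
    constructor
    · intro h
      have := (mul_lt_mul_iff_right₀ hApos).1 (by linarith [h] : A * ((1 + 1/P) * Real.log L) < A * Real.log L')
      linarith
    · intro h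
      have := (mul_lt_mul_iff_right₀ hApos).2 h
      nlinarith
  rw [key, hcheb]
  have hlogdiff : Real.log (1 + Real.log P / L) = Real.log L' - Real.log L := by
    have : 1 + Real.log P / L = L' / L := by
      rw [hL'eq]; field_simp
    rw [this, Real.log_div hL'pos.ne' hLpos.ne']
  rw [hlogdiff]
  constructor
  · intro h
    have : (1 + 1/P) * Real.log L = Real.log L + Real.log L / P := by ring
    rw [this] at h
    linarith
  · intro h
    have : (1 + 1/P) * Real.log L = Real.log L + Real.log L / P := by ring
    rw [this]
    linarith
end
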